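/- (Both endpoints on the U≥0 side: the optimum is the maximum of the separating curve and the two-segment path.) Let R=[p1,q1]×[p2,q2], let f:[p1,q1]→[p2,q2] be a nondecreasing C¹ function with f(p1)=p2 and f(q1)=q2, and let c be a C¹ cost field with U≥0 a.e. on {(x,y)∈R: y>f(x)} and U≤0 a.e. on {(x,y)∈R: y<f(x)} (attractor configuration). Let a=(a1,a2), b=(b1,b2)∈R with a1≤b1, a2≤b2, a2≥f(a1) and b2≥f(b1) (both points on or above the graph of f). Define g(t)=max(a2,f(t)) for t∈[a1,b1] (a piecewise-C¹ nondecreasing function, since f is nondecreasing). Then every monotone path γ from a to b satisfies cost(γ) ≥ ∫_{a1}^{b1} [c1(t,g(t)) + c2(t,g(t)) g'(t)] dt + ∫_{g(b1)}^{b2} c2(b1,s) ds, the right-hand side being the cost of the path that follows the graph of g (the pointwise maximum of the curve f and the horizontal two-segment path) and then the vertical segment from (b1,g(b1)) to b. -/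

import Mathlib

open MeasureTheory Set

/-- A monotone path in the plane: a continuous, piecewise-C¹ map
`p : [0,1] → ℝ²` whose two coordinate derivatives (given by `d`, and valid
outside a finite exceptional set `exc`) are nonnegative. -/
structure MonoPath where
  p : ℝ → ℝ × ℝ
  d : ℝ → ℝ × ℝ
  exc : Set ℝ
  exc_finite : exc.Finite
  cont : ContinuousOn p (Icc 0 1)
  deriv_fst : ∀ t ∈ Icc (0:ℝ) 1 \ exc, HasDerivAt (fun u => (p u).1) (d t).1 t
  deriv_snd : ∀ t ∈ Icc (0:ℝ) 1 \ exc, HasDerivAt (fun u => (p u).2) (d t).2 t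
  d_fst_nonneg : ∀ t ∈ Icc (0:ℝ) 1, 0 ≤ (d t).1
  d_snd_nonneg : ∀ t ∈ Icc (0:ℝ) 1, 0 ≤ (d t).2

/-- The cost of a monotone path under the cost field `c = (c1, c2)`:
`∫₀¹ (c1(γ(t)) γ₁'(t) + c2(γ(t)) γ₂'(t)) dt`. -/
noncomputable def pathCost (c : ℝ × ℝ → ℝ × ℝ) (γ : MonoPath) : ℝ :=
  ∫ t in (0:ℝ)..1, ((c (γ.p t)).1 * (γ.d t).1 + (c (γ.p t)).2 * (γ.d t).2)

/-- `γ` is a monotone path from `a` to `b`, staying in the rectangle `[a₁,b₁]×[a₂,b₂]`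
(which is `Set.Icc a b` for the product order on `ℝ × ℝ`). -/
def IsMonoPathFromTo (γ : MonoPath) (a b : ℝ × ℝ) : Prop :=
  γ.p 0 = a ∧ γ.p 1 = b ∧ ∀ t ∈ Icc (0:ℝ) 1, γ.p t ∈ Icc a b

/-- `U(x) = ∂c1/∂x2 (x) − ∂c2/∂x1 (x)`. -/
noncomputable def Ucurl (c : ℝ × ℝ → ℝ × ℝ) (x : ℝ × ℝ) : ℝ :=
  deriv (fun y => (c (x.1, y)).1) x.2 - deriv (fun s => (c (s, x.2)).2) x.1

/-- Hypograph function of a monotone path: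
`h_γ(x) = sup { γ₂(t) : t ∈ [0,1], γ₁(t) ≤ x }`. -/
noncomputable def hypoFun (γ : MonoPath) (x : ℝ) : ℝ :=
  sSup ((fun t => (γ.p t).2) '' {t | t ∈ Icc (0:ℝ) 1 ∧ (γ.p t).1 ≤ x})

/-- Hypograph region of a monotone path from `a` to `b`:
`A_γ = {(x,y) : a₁ < x < b₁, a₂ < y < h_γ(x)}`. -/
def hypoRegion (γ : MonoPath) (a b : ℝ × ℝ) : Set (ℝ × ℝ) :=
  {q | a.1 < q.1 ∧ q.1 < b.1 ∧ a.2 < q.2 ∧ q.2 < hypoFun γ q.1}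


/-- Witness extraction from an a.e. property on a restricted measure. -/
lemma exists_mem_of_ae_restrict {S T : Set (ℝ × ℝ)} (hT : MeasurableSet T) (hTS : T ⊆ S)
    (hpos : 0 < volume T) {P : ℝ × ℝ → Prop}
    (h : ∀ᵐ q ∂(volume.restrict S), P q) : ∃ q ∈ T, P q := by
  by_contra hno
  push_neg at hno
  have hsub : T ⊆ {q | ¬ P q} := fun q hq => hno q hq
  have h0 : (volume.restrict S) {q | ¬ P q} = 0 := by
    simpa [ae_iff] using h
  have h1 : (volume.restrict S) T = volume T := by
    rw [Measure.restrict_apply hT, inter_eq_self_of_subset_left hTS]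
  have := measure_mono (μ := volume.restrict S) hsub
  rw [h0, h1] at this
  exact absurd (le_antisymm this bot_le) hpos.ne'

/-- Integrability of a nonnegative derivative off a finite exceptional set. -/
lemma integrableOn_of_deriv_nonneg_off_finite :
    ∀ (n : ℕ) (s : Set ℝ), s.Finite → ∀ (hs : s.Finite), hs.toFinset.card ≤ n →
    ∀ (F F' : ℝ → ℝ) (u v : ℝ), u ≤ v →
    ContinuousOn F (Icc u v) → (∀ t ∈ Ioo u v \ s, HasDerivAt F (F' t) t) →
    (∀ t ∈ Ioo u v \ s, 0 ≤ F' t) → IntegrableOn F' (Ioc u v) := by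
  intro n
  induction n with
  | zero =>
    intro s _ hs hcard F F' u v huv hc hd hpos
    have hse : s = ∅ := by
      have := Finset.card_eq_zero.mp (Nat.le_zero.mp hcard)
      simpa [Set.Finite.toFinset_eq_empty] using this
    subst hse
    exact intervalIntegral.integrableOn_deriv_of_nonneg hc
      (fun t ht => hd t ⟨ht, notMem_empty t⟩) (fun t ht => hpos t ⟨ht, notMem_empty t⟩)
  | succ n ih =>
    intro s hsf hs hcard F F' u v huv hc hd hpos
    by_cases hne : (s ∩ Ioo u v).Nonempty
    · obtain ⟨w, hws, hw⟩ := hne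
      have hs' : (s \ {w}).Finite := hsf.diff
      have hcard' : hs'.toFinset.card ≤ n := by
        have hsub : hs'.toFinset ⊆ hs.toFinset.erase w := by
          intro t ht
          simp only [Set.Finite.mem_toFinset, mem_diff, mem_singleton_iff] at ht
          exact Finset.mem_erase.mpr ⟨ht.2, (Set.Finite.mem_toFinset hs).mpr ht.1⟩
        have := Finset.card_le_card hsub
        have hwmem : w ∈ hs.toFinset := (Set.Finite.mem_toFinset hs).mpr hws
        rw [Finset.card_erase_of_mem hwmem] at this
        omega
      have h1 : IntegrableOn F' (Ioc u w) := by
        refine ih (s \ {w}) hs' hs' hcard' F F' u w hw.1.le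
          (hc.mono (Icc_subset_Icc le_rfl hw.2.le)) (fun t ht => hd t ?_) (fun t ht => hpos t ?_)
          <;> exact ⟨Ioo_subset_Ioo le_rfl hw.2.le ht.1,
            fun hts => ht.2 ⟨hts, fun h => absurd (h ▸ ht.1.2) (lt_irrefl w)⟩⟩
      have h2 : IntegrableOn F' (Ioc w v) := by
        refine ih (s \ {w}) hs' hs' hcard' F F' w v hw.2.le
          (hc.mono (Icc_subset_Icc hw.1.le le_rfl)) (fun t ht => hd t ?_) (fun t ht => hpos t ?_)
          <;> exact ⟨Ioo_subset_Ioo hw.1.le le_rfl ht.1,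
            fun hts => ht.2 ⟨hts, fun h => absurd (h ▸ ht.1.1) (lt_irrefl w)⟩⟩
      have := h1.union h2
      rwa [Ioc_union_Ioc_eq_Ioc hw.1.le hw.2.le] at this
    · rw [not_nonempty_iff_eq_empty] at hne
      refine intervalIntegral.integrableOn_deriv_of_nonneg hc
        (fun t ht => hd t ⟨ht, ?_⟩) (fun t ht => hpos t ⟨ht, ?_⟩)
      all_goals exact fun hts => (eq_empty_iff_forall_notMem.mp hne t ⟨hts, ht⟩)

/-- Pointwise sign of a continuous function from an a.e. sign condition on the region
above the curve `f` inside a rectangle. -/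
lemma sign_above_of_ae {p1 q1 p2 q2 : ℝ} (hpq : p1 < q1) {f : ℝ → ℝ} {x s : ℝ}
    (hfc : ContinuousWithinAt f (Icc p1 q1) x)
    (hx : x ∈ Icc p1 q1) (hs : s ∈ Icc p2 q2) (hfx_low : p2 ≤ f x) (hfs : f x ≤ s)
    (hfq2 : f x < q2) {U : ℝ × ℝ → ℝ} (hU : Continuous U)
    (hae : ∀ᵐ q ∂(volume.restrict {q : ℝ × ℝ | q ∈ Icc p1 q1 ×ˢ Icc p2 q2 ∧ f q.1 < q.2}),
      0 ≤ U q) : 0 ≤ U (x, s) := by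
  by_contra hneg
  push_neg at hneg
  -- a ball on which U < 0
  have hop : IsOpen (U ⁻¹' Iio 0) := isOpen_Iio.preimage hU
  obtain ⟨ε, hε, hball⟩ := Metric.isOpen_iff.mp hop (x, s) hneg
  set ε' : ℝ := ε / 2 with hε'def
  have hε' : 0 < ε' := by positivity
  set η : ℝ := min (ε' / 2) ((q2 - f x) / 2) with hηdef
  have hη : 0 < η := by
    apply lt_min (by positivity)
    have := sub_pos.mpr hfq2
    positivity
  have hηε' : η < ε' := lt_of_le_of_lt (min_le_left _ _) (by linarith)
  have hηq2 : η < q2 - f x := lt_of_le_of_lt (min_le_right _ _) (by linarith [sub_pos.mpr hfq2])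
  -- continuity of f at x within the interval
  obtain ⟨δ, hδ, hfδ⟩ := Metric.continuousWithinAt_iff.mp hfc η hη
  set δ' : ℝ := min δ ε' with hδ'def
  have hδ' : 0 < δ' := lt_min hδ hε'
  -- the horizontal interval
  obtain ⟨α, β, hαβ, hI⟩ : ∃ α β : ℝ, α < β ∧ Ioo α β ⊆ Icc p1 q1 ∩ Metric.ball x δ' := by
    rcases lt_or_eq_of_le hx.2 with hxq | hxq
    · refine ⟨x, min q1 (x + δ'), by simp [hxq, hδ'], fun t ht => ?_⟩
      obtain ⟨ht1, ht2⟩ := ht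
      rw [lt_min_iff] at ht2
      exact ⟨⟨le_trans hx.1 ht1.le, ht2.1.le⟩, by
        rw [Real.ball_eq_Ioo]; exact ⟨by linarith, ht2.2⟩⟩
    · refine ⟨max p1 (x - δ'), x, by rw [← hxq] at hpq; simp [hpq, hδ'], fun t ht => ?_⟩
      obtain ⟨ht1, ht2⟩ := ht
      rw [max_lt_iff] at ht1
      exact ⟨⟨ht1.1.le, le_trans ht2.le hx.2⟩, by
        rw [Real.ball_eq_Ioo]; exact ⟨ht1.2, by linarith⟩⟩
  -- the vertical interval
  set mo : ℝ := max (s - ε') (f x + η) with hmodef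
  set hi : ℝ := min (s + ε') q2 with hhidef
  have hmohi : mo < hi := by
    rw [max_lt_iff, lt_min_iff, lt_min_iff]
    refine ⟨⟨by linarith, lt_of_lt_of_le (by linarith) hs.2⟩, ⟨by linarith, by linarith⟩⟩
  -- the rectangle is inside the region and the ball
  have hsub : Ioo α β ×ˢ Ioo mo hi ⊆
      {q : ℝ × ℝ | q ∈ Icc p1 q1 ×ˢ Icc p2 q2 ∧ f q.1 < q.2} := by
    rintro ⟨x', y'⟩ ⟨hx', hy'⟩
    have hxI := hI hx'
    have hfx' : |f x' - f x| < η := by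
      have := hfδ hxI.1 (by
        have := hxI.2; rw [Metric.mem_ball] at this
        exact lt_of_lt_of_le this (min_le_left _ _))
      rwa [Real.dist_eq] at this
    rw [abs_lt] at hfx'
    have hy'1 : mo < y' := hy'.1
    have hy'2 : y' < hi := hy'.2
    have hmo1 : f x + η ≤ mo := le_max_right _ _
    constructor
    · refine ⟨hxI.1, ⟨?_, ?_⟩⟩
      · have : p2 ≤ f x := hfx_low
        linarith [hy'.1, le_max_right (s - ε') (f x + η)]
      · exact le_trans hy'2.le (min_le_right _ _)
    · have : f x' < f x + η := by linarith
      linarith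
  have hsubball : Ioo α β ×ˢ Ioo mo hi ⊆ Metric.ball (x, s) ε := by
    rintro ⟨x', y'⟩ ⟨hx', hy'⟩
    have hxI := hI hx'
    rw [Metric.mem_ball, Prod.dist_eq, Real.dist_eq, Real.dist_eq]
    apply max_lt
    · have := hxI.2; rw [Metric.mem_ball, Real.dist_eq] at this
      exact lt_of_lt_of_le (lt_of_lt_of_le this (min_le_right _ _)) (by linarith)
    · rw [abs_lt]
      constructor
      · have h1 : s - ε' ≤ mo := le_max_left _ _
        have h2 := hy'.1
        simp only at h2 ⊢
        linarith
      · have h1 : hi ≤ s + ε' := min_le_left _ _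
        have h2 := hy'.2
        simp only at h2 ⊢
        linarith
  obtain ⟨q, hqT, hqP⟩ := exists_mem_of_ae_restrict
    (measurableSet_Ioo.prod measurableSet_Ioo) hsub
    (by
      rw [show (volume : Measure (ℝ × ℝ)) = Measure.prod volume volume from rfl,
        Measure.prod_prod, Real.volume_Ioo, Real.volume_Ioo]
      exact ENNReal.mul_pos (by simp [hαβ]) (by simp [hmohi])) hae
  have : U q < 0 := hball (hsubball hqT)
  linarith

/-- Pointwise sign of a continuous function from an a.e. sign condition on the region
below the curve `f` inside a rectangle. -/
lemma sign_below_of_ae {p1 q1 p2 q2 : ℝ} (hpq : p1 < q1) {f : ℝ → ℝ} {x s : ℝ}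
    (hfc : ContinuousWithinAt f (Icc p1 q1) x)
    (hx : x ∈ Icc p1 q1) (hs : s ∈ Icc p2 q2) (hfx_hi : f x ≤ q2) (hfs : s ≤ f x)
    (hfp2 : p2 < f x) {U : ℝ × ℝ → ℝ} (hU : Continuous U)
    (hae : ∀ᵐ q ∂(volume.restrict {q : ℝ × ℝ | q ∈ Icc p1 q1 ×ˢ Icc p2 q2 ∧ q.2 < f q.1}),
      U q ≤ 0) : U (x, s) ≤ 0 := by
  by_contra hneg
  push_neg at hneg
  have hop : IsOpen (U ⁻¹' Ioi 0) := isOpen_Ioi.preimage hU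
  obtain ⟨ε, hε, hball⟩ := Metric.isOpen_iff.mp hop (x, s) hneg
  set ε' : ℝ := ε / 2 with hε'def
  have hε' : 0 < ε' := by positivity
  set η : ℝ := min (ε' / 2) ((f x - p2) / 2) with hηdef
  have hη : 0 < η := by
    apply lt_min (by positivity)
    have := sub_pos.mpr hfp2
    positivity
  have hηε' : η < ε' := lt_of_le_of_lt (min_le_left _ _) (by linarith)
  have hηp2 : η < f x - p2 := lt_of_le_of_lt (min_le_right _ _) (by linarith [sub_pos.mpr hfp2])
  obtain ⟨δ, hδ, hfδ⟩ := Metric.continuousWithinAt_iff.mp hfc η hη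
  set δ' : ℝ := min δ ε' with hδ'def
  have hδ' : 0 < δ' := lt_min hδ hε'
  obtain ⟨α, β, hαβ, hI⟩ : ∃ α β : ℝ, α < β ∧ Ioo α β ⊆ Icc p1 q1 ∩ Metric.ball x δ' := by
    rcases lt_or_eq_of_le hx.2 with hxq | hxq
    · refine ⟨x, min q1 (x + δ'), by simp [hxq, hδ'], fun t ht => ?_⟩
      obtain ⟨ht1, ht2⟩ := ht
      rw [lt_min_iff] at ht2
      exact ⟨⟨le_trans hx.1 ht1.le, ht2.1.le⟩, by
        rw [Real.ball_eq_Ioo]; exact ⟨by linarith, ht2.2⟩⟩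
    · refine ⟨max p1 (x - δ'), x, by rw [← hxq] at hpq; simp [hpq, hδ'], fun t ht => ?_⟩
      obtain ⟨ht1, ht2⟩ := ht
      rw [max_lt_iff] at ht1
      exact ⟨⟨ht1.1.le, le_trans ht2.le hx.2⟩, by
        rw [Real.ball_eq_Ioo]; exact ⟨ht1.2, by linarith⟩⟩
  set mo : ℝ := max (s - ε') p2 with hmodef
  set hi : ℝ := min (s + ε') (f x - η) with hhidef
  have hmohi : mo < hi := by
    rw [max_lt_iff, lt_min_iff, lt_min_iff]
    exact ⟨⟨by linarith, by linarith⟩, ⟨by linarith [hs.1], by linarith⟩⟩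
  have hsub : Ioo α β ×ˢ Ioo mo hi ⊆
      {q : ℝ × ℝ | q ∈ Icc p1 q1 ×ˢ Icc p2 q2 ∧ q.2 < f q.1} := by
    rintro ⟨x', y'⟩ ⟨hx', hy'⟩
    have hxI := hI hx'
    have hfx' : |f x' - f x| < η := by
      have := hfδ hxI.1 (by
        have := hxI.2; rw [Metric.mem_ball] at this
        exact lt_of_lt_of_le this (min_le_left _ _))
      rwa [Real.dist_eq] at this
    rw [abs_lt] at hfx'
    have hy'1 : mo < y' := hy'.1
    have hy'2 : y' < hi := hy'.2
    have hhi1 : hi ≤ f x - η := min_le_right _ _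
    constructor
    · refine ⟨hxI.1, ⟨?_, ?_⟩⟩
      · linarith [le_max_right (s - ε') p2]
      · simp only at hy'2 ⊢; linarith
    · simp only at hy'2 ⊢; linarith
  have hsubball : Ioo α β ×ˢ Ioo mo hi ⊆ Metric.ball (x, s) ε := by
    rintro ⟨x', y'⟩ ⟨hx', hy'⟩
    have hxI := hI hx'
    rw [Metric.mem_ball, Prod.dist_eq, Real.dist_eq, Real.dist_eq]
    apply max_lt
    · have := hxI.2; rw [Metric.mem_ball, Real.dist_eq] at this
      exact lt_of_lt_of_le (lt_of_lt_of_le this (min_le_right _ _)) (by linarith)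
    · rw [abs_lt]
      constructor
      · have h1 : s - ε' ≤ mo := le_max_left _ _
        have h2 := hy'.1
        simp only at h2 ⊢
        linarith
      · have h1 : hi ≤ s + ε' := min_le_left _ _
        have h2 := hy'.2
        simp only at h2 ⊢
        linarith
  obtain ⟨q, hqT, hqP⟩ := exists_mem_of_ae_restrict
    (measurableSet_Ioo.prod measurableSet_Ioo) hsub
    (by
      rw [show (volume : Measure (ℝ × ℝ)) = Measure.prod volume volume from rfl,
        Measure.prod_prod, Real.volume_Ioo, Real.volume_Ioo]
      exact ENNReal.mul_pos (by simp [hαβ]) (by simp [hmohi])) hae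
  have : 0 < U q := hball (hsubball hqT)
  linarith

open intervalIntegral in
/-- Joint differentiability of `(x, y) ↦ ∫ s in y0..y, k x s` when `k` is continuous with
continuous first partial derivative `dk`. -/
lemma hasFDerivAt_parametric_integral {k dk : ℝ → ℝ → ℝ}
    (hk : Continuous (Function.uncurry k))
    (hdk : ∀ x s, HasDerivAt (fun x' => k x' s) (dk x s) x)
    (hdkc : Continuous (Function.uncurry dk)) (y0 x y : ℝ) :
    HasFDerivAt (fun q : ℝ × ℝ => ∫ s in y0..q.2, k q.1 s)
      ((∫ s in y0..y, dk x s) • ContinuousLinearMap.fst ℝ ℝ ℝ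
        + (k x y) • ContinuousLinearMap.snd ℝ ℝ ℝ) (x, y) := by
  have hks : ∀ x' : ℝ, Continuous (k x') := fun x' => hk.comp (Continuous.prodMk_right x')
  have hdks : ∀ x' : ℝ, Continuous (dk x') := fun x' => hdkc.comp (Continuous.prodMk_right x')
  rw [hasFDerivAt_iff_isLittleO_nhds_zero, Asymptotics.isLittleO_iff]
  intro ε hε
  set C : ℝ := |y - y0| + 1 with hCdef
  have hC : 0 < C := by positivity
  set ε1 : ℝ := ε / 2 with hε1def
  have hε1 : 0 < ε1 := by positivity
  set ε2 : ℝ := ε / (2 * C) with hε2def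
  have hε2 : 0 < ε2 := by positivity
  -- δ₁ from continuity of k at (x, y)
  obtain ⟨δ₁, hδ₁, hkδ⟩ := Metric.continuousAt_iff.mp (hk.continuousAt
    (x := ((x : ℝ), (y : ℝ)))) ε1 hε1
  -- δ₂ from uniform continuity of dk on a compact set
  have hKcomp : IsCompact (Icc (x - 1) (x + 1) ×ˢ uIcc y0 y) :=
    isCompact_Icc.prod isCompact_uIcc
  obtain ⟨δ₂, hδ₂, hdkδ⟩ := Metric.uniformContinuousOn_iff.mp
    (hKcomp.uniformContinuousOn_of_continuous hdkc.continuousOn) ε2 hε2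
  set δ : ℝ := min (min δ₁ δ₂) 1 with hδdef
  have hδ : 0 < δ := lt_min (lt_min hδ₁ hδ₂) one_pos
  have hδ1 : δ ≤ δ₁ := le_trans (min_le_left _ _) (min_le_left _ _)
  have hδ2 : δ ≤ δ₂ := le_trans (min_le_left _ _) (min_le_right _ _)
  have hδone : δ ≤ 1 := min_le_right _ _
  filter_upwards [Metric.ball_mem_nhds (0 : ℝ × ℝ) (half_pos hδ)] with h hh
  rw [Metric.mem_ball, dist_zero_right] at hh
  obtain ⟨u, v⟩ := h
  have hnu : |u| ≤ ‖(u, v)‖ := by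
    rw [Prod.norm_def]; exact le_max_left _ _
  have hnv : |v| ≤ ‖(u, v)‖ := by
    rw [Prod.norm_def]; exact le_max_right _ _
  have hu : |u| < δ / 2 := lt_of_le_of_lt hnu hh
  have hv : |v| < δ / 2 := lt_of_le_of_lt hnv hh
  -- integrability facts
  have hint1 : IntervalIntegrable (fun s => k (x + u) s) volume y0 y :=
    (hks _).intervalIntegrable _ _
  have hint2 : IntervalIntegrable (fun s => k (x + u) s) volume y (y + v) :=
    (hks _).intervalIntegrable _ _
  have hint3 : IntervalIntegrable (fun s => k x s) volume y0 y :=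
    (hks _).intervalIntegrable _ _
  have hint4 : IntervalIntegrable (fun s => dk x s * u) volume y0 y :=
    ((hdks x).mul continuous_const).intervalIntegrable _ _
  -- decompose the difference
  have hsplit : (∫ s in y0..(y + v), k (x + u) s) =
      (∫ s in y0..y, k (x + u) s) + ∫ s in y..(y + v), k (x + u) s :=
    (integral_add_adjacent_intervals hint1 hint2).symm
  have hT2eq : (∫ s in y0..y, k (x + u) s) - (∫ s in y0..y, k x s)
      - (∫ s in y0..y, dk x s) * u
      = ∫ s in y0..y, (k (x + u) s - k x s - dk x s * u) := by
    rw [integral_sub (hint1.sub hint3) hint4, integral_sub hint1 hint3,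
      intervalIntegral.integral_mul_const]
  have hT1eq : (∫ s in y..(y + v), k (x + u) s) - k x y * v
      = ∫ s in y..(y + v), (k (x + u) s - k x y) := by
    rw [integral_sub hint2 (intervalIntegrable_const), intervalIntegral.integral_const]
    simp [smul_eq_mul]; ring
  -- bound T1
  have hT1 : ‖∫ s in y..(y + v), (k (x + u) s - k x y)‖ ≤ ε1 * ‖(u, v)‖ := by
    have hbd : ∀ s ∈ uIoc y (y + v), ‖k (x + u) s - k x y‖ ≤ ε1 := by
      intro s hs
      have hsy : |s - y| ≤ |v| := by
        rw [Set.mem_uIoc] at hs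
        rcases hs with hs | hs
        · rw [abs_le]; constructor <;> [linarith [hs.1, abs_nonneg v]; skip]
          have : s ≤ y + v := hs.2
          have : v ≤ |v| := le_abs_self v
          linarith [hs.1]
        · rw [abs_le]
          have : -v ≤ |v| := neg_le_abs v
          constructor <;> linarith [hs.1, hs.2]
      have hd : dist ((x + u, s) : ℝ × ℝ) (x, y) < δ₁ := by
        rw [Prod.dist_eq, Real.dist_eq, Real.dist_eq]
        have h1 : |x + u - x| < δ / 2 := by simpa using hu
        have h2 : |s - y| < δ / 2 := lt_of_le_of_lt hsy hv
        exact lt_of_lt_of_le (max_lt h1 h2) (by linarith)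
      have := hkδ hd
      rw [Function.uncurry] at this
      simpa [Real.dist_eq] using this.le
    calc ‖∫ s in y..(y + v), (k (x + u) s - k x y)‖
        ≤ ε1 * |y + v - y| := intervalIntegral.norm_integral_le_of_norm_le_const hbd
      _ = ε1 * |v| := by rw [add_sub_cancel_left]
      _ ≤ ε1 * ‖(u, v)‖ := by
          apply mul_le_mul_of_nonneg_left hnv hε1.le
  -- bound T2 pointwise via the mean value inequality
  have hT2 : ‖∫ s in y0..y, (k (x + u) s - k x s - dk x s * u)‖ ≤ (ε / 2) * ‖(u, v)‖ := by
    have hbd : ∀ s ∈ uIoc y0 y, ‖k (x + u) s - k x s - dk x s * u‖ ≤ ε2 * |u| := by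
      intro s hs
      have hsIcc : s ∈ uIcc y0 y := uIoc_subset_uIcc hs
      set I : Set ℝ := Icc (x - δ / 2) (x + δ / 2) with hIdef
      have hmvt := Convex.norm_image_sub_le_of_norm_hasDerivWithin_le
        (f := fun w => k w s - dk x s * w) (f' := fun w => dk w s - dk x s)
        (s := I) (C := ε2)
        (fun w _ => by simpa [Pi.sub_def] using ((hdk w s).sub ((hasDerivAt_id w).const_mul (dk x s))).hasDerivWithinAt)
        (fun w hw => by
          have hw1 : |w - x| ≤ δ / 2 := by
            rw [abs_le]; exact ⟨by linarith [hw.1], by linarith [hw.2]⟩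
          have hmem1 : (w, s) ∈ Icc (x - 1) (x + 1) ×ˢ uIcc y0 y := by
            refine ⟨?_, hsIcc⟩
            rw [abs_le] at hw1
            exact ⟨by linarith, by linarith⟩
          have hmem2 : ((x : ℝ), s) ∈ Icc (x - 1) (x + 1) ×ˢ uIcc y0 y := by
            refine ⟨?_, hsIcc⟩
            constructor <;> linarith
          have hd : dist ((w, s) : ℝ × ℝ) (x, s) < δ₂ := by
            rw [Prod.dist_eq, Real.dist_eq, Real.dist_eq]
            simp only [sub_self, abs_zero]
            rw [max_eq_left (abs_nonneg _)]
            calc |w - x| ≤ δ / 2 := hw1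
              _ < δ₂ := by linarith
          have := hdkδ _ hmem1 _ hmem2 hd
          rw [Function.uncurry, Function.uncurry] at this
          simpa [Real.dist_eq] using this.le)
        (convex_Icc _ _)
        (⟨by linarith, by linarith⟩ : x ∈ I)
        (show x + u ∈ I by
          have hu1 : -(δ / 2) ≤ u := neg_le_of_abs_le hu.le
          have hu2 : u ≤ δ / 2 := le_of_abs_le hu.le
          exact ⟨by linarith, by linarith⟩)
      have : ‖(k (x + u) s - dk x s * (x + u)) - (k x s - dk x s * x)‖ ≤ ε2 * ‖(x + u) - x‖ :=
        hmvt
      calc ‖k (x + u) s - k x s - dk x s * u‖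
          = ‖(k (x + u) s - dk x s * (x + u)) - (k x s - dk x s * x)‖ := by congr 1; ring
        _ ≤ ε2 * ‖(x + u) - x‖ := this
        _ = ε2 * |u| := by rw [show (x + u) - x = u by ring, Real.norm_eq_abs]
    calc ‖∫ s in y0..y, (k (x + u) s - k x s - dk x s * u)‖
        ≤ ε2 * |u| * |y - y0| := intervalIntegral.norm_integral_le_of_norm_le_const hbd
      _ ≤ ε2 * ‖(u, v)‖ * C := by
          apply mul_le_mul (mul_le_mul_of_nonneg_left hnu hε2.le)
            (by show |y - y0| ≤ |y - y0| + 1; linarith) (abs_nonneg _) (by positivity)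
      _ = (ε / 2) * ‖(u, v)‖ := by
          rw [hε2def]
          field_simp
  -- put everything together
  have hfinal : ‖(∫ s in y0..(y + v), k (x + u) s) - (∫ s in y0..y, k x s)
      - ((∫ s in y0..y, dk x s) * u + k x y * v)‖ ≤ ε * ‖(u, v)‖ := by
    have : (∫ s in y0..(y + v), k (x + u) s) - (∫ s in y0..y, k x s)
        - ((∫ s in y0..y, dk x s) * u + k x y * v)
        = (∫ s in y0..y, (k (x + u) s - k x s - dk x s * u))
          + ∫ s in y..(y + v), (k (x + u) s - k x y) := by
      rw [← hT2eq, ← hT1eq, hsplit]; ring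
    rw [this]
    refine le_trans (norm_add_le _ _) ?_
    calc _ ≤ (ε / 2) * ‖(u, v)‖ + ε1 * ‖(u, v)‖ := add_le_add hT2 hT1
      _ = ε * ‖(u, v)‖ := by rw [hε1def]; ring
  simpa using hfinal

section DerivHelpers

variable {c : ℝ × ℝ → ℝ × ℝ}

/-- First partial of the second component. -/
noncomputable def d12 (c : ℝ × ℝ → ℝ × ℝ) (q : ℝ × ℝ) : ℝ := ((fderiv ℝ c q) (1, 0)).2

/-- Second partial of the first component. -/
noncomputable def d21 (c : ℝ × ℝ → ℝ × ℝ) (q : ℝ × ℝ) : ℝ := ((fderiv ℝ c q) (0, 1)).1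

lemma hasDerivAt_d21 (hc : ContDiff ℝ 1 c) (x y : ℝ) :
    HasDerivAt (fun y' => (c (x, y')).1) (d21 c (x, y)) y := by
  have h1 : HasDerivAt (fun y' : ℝ => ((x : ℝ), y')) ((0 : ℝ), (1 : ℝ)) y :=
    (hasDerivAt_const y x).prodMk (hasDerivAt_id y)
  have h2 := ((hc.differentiable one_ne_zero) (x, y)).hasFDerivAt.comp_hasDerivAt y h1
  exact (ContinuousLinearMap.fst ℝ ℝ ℝ).hasFDerivAt.comp_hasDerivAt y h2

lemma hasDerivAt_d12 (hc : ContDiff ℝ 1 c) (x y : ℝ) :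
    HasDerivAt (fun x' => (c (x', y)).2) (d12 c (x, y)) x := by
  have h1 : HasDerivAt (fun x' : ℝ => (x', (y : ℝ))) ((1 : ℝ), (0 : ℝ)) x :=
    (hasDerivAt_id x).prodMk (hasDerivAt_const x y)
  have h2 := ((hc.differentiable one_ne_zero) (x, y)).hasFDerivAt.comp_hasDerivAt x h1
  exact (ContinuousLinearMap.snd ℝ ℝ ℝ).hasFDerivAt.comp_hasDerivAt x h2

lemma continuous_d21 (hc : ContDiff ℝ 1 c) : Continuous (d21 c) :=
  (((hc.continuous_fderiv one_ne_zero).clm_apply continuous_const)).fst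

lemma continuous_d12 (hc : ContDiff ℝ 1 c) : Continuous (d12 c) :=
  (((hc.continuous_fderiv one_ne_zero).clm_apply continuous_const)).snd

lemma ucurl_eq_sub (hc : ContDiff ℝ 1 c) (q : ℝ × ℝ) :
    Ucurl c q = d21 c q - d12 c q := by
  have h1 : deriv (fun y => (c (q.1, y)).1) q.2 = d21 c (q.1, q.2) :=
    (hasDerivAt_d21 hc q.1 q.2).deriv
  have h2 : deriv (fun s => (c (s, q.2)).2) q.1 = d12 c (q.1, q.2) :=
    (hasDerivAt_d12 hc q.1 q.2).deriv
  rw [Ucurl, h1, h2]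

lemma continuous_ucurl (hc : ContDiff ℝ 1 c) : Continuous (Ucurl c) := by
  have : Ucurl c = fun q => d21 c q - d12 c q := funext (ucurl_eq_sub hc)
  rw [this]
  exact (continuous_d21 hc).sub (continuous_d12 hc)

end DerivHelpers

section FieldPieces

variable {c : ℝ × ℝ → ℝ × ℝ}

/-- Vertical primitive of the second cost component. -/
noncomputable def Hfun (c : ℝ × ℝ → ℝ × ℝ) (a2 : ℝ) (q : ℝ × ℝ) : ℝ :=
  ∫ s in a2..q.2, (c (q.1, s)).2

/-- Vertical primitive of the first partial of the second cost component. -/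
noncomputable def Pfun (c : ℝ × ℝ → ℝ × ℝ) (a2 : ℝ) (q : ℝ × ℝ) : ℝ :=
  ∫ s in a2..q.2, d12 c (q.1, s)

/-- Vertical primitive of the curl. -/
noncomputable def Vfun (c : ℝ × ℝ → ℝ × ℝ) (a2 : ℝ) (q : ℝ × ℝ) : ℝ :=
  ∫ s in a2..q.2, Ucurl c (q.1, s)

/-- Horizontal primitive of the first cost component at height `a2`. -/
noncomputable def Afun (c : ℝ × ℝ → ℝ × ℝ) (a1 a2 : ℝ) (x : ℝ) : ℝ :=
  ∫ t in a1..x, (c (t, a2)).1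

lemma continuous_Hfun (hc : ContDiff ℝ 1 c) (a2 : ℝ) : Continuous (Hfun c a2) := by
  have h : Continuous (Function.uncurry fun (x s : ℝ) => (c (x, s)).2) :=
    (hc.continuous.comp (continuous_fst.prodMk continuous_snd)).snd
  exact intervalIntegral.continuous_parametric_primitive_of_continuous (μ := volume)
    (a₀ := a2) h

lemma continuous_Pfun (hc : ContDiff ℝ 1 c) (a2 : ℝ) : Continuous (Pfun c a2) := by
  have h : Continuous (Function.uncurry fun (x s : ℝ) => d12 c (x, s)) :=
    (continuous_d12 hc).comp (continuous_fst.prodMk continuous_snd)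
  exact intervalIntegral.continuous_parametric_primitive_of_continuous (μ := volume)
    (a₀ := a2) h

lemma continuous_Vfun (hc : ContDiff ℝ 1 c) (a2 : ℝ) : Continuous (Vfun c a2) := by
  have h : Continuous (Function.uncurry fun (x s : ℝ) => Ucurl c (x, s)) :=
    (continuous_ucurl hc).comp (continuous_fst.prodMk continuous_snd)
  exact intervalIntegral.continuous_parametric_primitive_of_continuous (μ := volume)
    (a₀ := a2) h

lemma hasFDerivAt_Hfun (hc : ContDiff ℝ 1 c) (a2 : ℝ) (q : ℝ × ℝ) :
    HasFDerivAt (Hfun c a2)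
      ((Pfun c a2 q) • ContinuousLinearMap.fst ℝ ℝ ℝ
        + ((c q).2) • ContinuousLinearMap.snd ℝ ℝ ℝ) q := by
  have h := hasFDerivAt_parametric_integral (k := fun x s => (c (x, s)).2)
    (dk := fun x s => d12 c (x, s))
    ((hc.continuous.comp (continuous_fst.prodMk continuous_snd)).snd)
    (fun x s => hasDerivAt_d12 hc x s)
    ((continuous_d12 hc).comp (continuous_fst.prodMk continuous_snd)) a2 q.1 q.2
  exact h

lemma hasDerivAt_Afun (hc : ContDiff ℝ 1 c) (a1 a2 x : ℝ) :
    HasDerivAt (Afun c a1 a2) ((c (x, a2)).1) x := by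
  have h : Continuous fun t : ℝ => (c (t, a2)).1 :=
    (hc.continuous.comp (continuous_id.prodMk continuous_const)).fst
  exact (h.integral_hasStrictDerivAt a1 x).hasDerivAt

lemma continuous_Afun (hc : ContDiff ℝ 1 c) (a1 a2 : ℝ) : Continuous (Afun c a1 a2) :=
  continuous_iff_continuousAt.mpr fun x => (hasDerivAt_Afun hc a1 a2 x).continuousAt

lemma cost_decomp (hc : ContDiff ℝ 1 c) (a2 : ℝ) (q : ℝ × ℝ) :
    (c q).1 = (c (q.1, a2)).1 + Pfun c a2 q + Vfun c a2 q := by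
  have hcont21 : Continuous fun s : ℝ => d21 c (q.1, s) :=
    (continuous_d21 hc).comp (continuous_const.prodMk continuous_id)
  have hcont12 : Continuous fun s : ℝ => d12 c (q.1, s) :=
    (continuous_d12 hc).comp (continuous_const.prodMk continuous_id)
  have h21 : (∫ s in a2..q.2, d21 c (q.1, s)) = (c (q.1, q.2)).1 - (c (q.1, a2)).1 :=
    intervalIntegral.integral_eq_sub_of_hasDerivAt
      (fun s _ => hasDerivAt_d21 hc q.1 s) (hcont21.intervalIntegrable _ _)
  have hV : Vfun c a2 q = (∫ s in a2..q.2, d21 c (q.1, s)) - ∫ s in a2..q.2, d12 c (q.1, s) := by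
    rw [Vfun, ← intervalIntegral.integral_sub (hcont21.intervalIntegrable _ _)
      (hcont12.intervalIntegrable _ _)]
    congr 1
    ext s
    exact ucurl_eq_sub hc (q.1, s)
  rw [hV, h21]
  have : (q.1, q.2) = q := rfl
  rw [this, Pfun]
  ring

end FieldPieces

/-- attractor configuration, both endpoints on or above the separating curve
`f`: the optimal path follows the pointwise maximum `g(t) = max(a₂, f(t))` of the curve and
the horizontal two-segment path, then goes vertically up to `b`. -/
theorem attractor_both_above (p1 q1 p2 q2 : ℝ) (hp1 : p1 ≤ q1) (hp2 : p2 ≤ q2)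
    (f : ℝ → ℝ) (hf : ContDiffOn ℝ 1 f (Icc p1 q1)) (hfmono : MonotoneOn f (Icc p1 q1))
    (hfmaps : ∀ t ∈ Icc p1 q1, f t ∈ Icc p2 q2) (hfp : f p1 = p2) (hfq : f q1 = q2)
    (c : ℝ × ℝ → ℝ × ℝ) (hc : ContDiff ℝ 1 c)
    (hUup : ∀ᵐ q ∂(volume.restrict
      {q : ℝ × ℝ | q ∈ Icc p1 q1 ×ˢ Icc p2 q2 ∧ f q.1 < q.2}), 0 ≤ Ucurl c q)
    (hUlow : ∀ᵐ q ∂(volume.restrict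
      {q : ℝ × ℝ | q ∈ Icc p1 q1 ×ˢ Icc p2 q2 ∧ q.2 < f q.1}), Ucurl c q ≤ 0)
    (a b : ℝ × ℝ) (ha : a ∈ Icc p1 q1 ×ˢ Icc p2 q2) (hb : b ∈ Icc p1 q1 ×ˢ Icc p2 q2)
    (hab1 : a.1 ≤ b.1) (hab2 : a.2 ≤ b.2)
    (haup : f a.1 ≤ a.2) (hbup : f b.1 ≤ b.2)
    (γ : MonoPath) (hγ : IsMonoPathFromTo γ a b) :
    (∫ t in a.1..b.1,
        ((c (t, max a.2 (f t))).1 +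
          (c (t, max a.2 (f t))).2 *
            derivWithin (fun u => max a.2 (f u)) (Icc a.1 b.1) t)) +
      (∫ s in (max a.2 (f b.1))..b.2, (c (b.1, s)).2) ≤ pathCost c γ := by
  obtain ⟨hγ0, hγ1, hγmem⟩ := hγ
  obtain ⟨ha1, ha2⟩ := ha
  obtain ⟨hb1, hb2⟩ := hb
  have hUcont : Continuous (Ucurl c) := continuous_ucurl hc
  have hfc : ContinuousOn f (Icc p1 q1) := hf.continuousOn
  have hIccsub : Icc a.1 b.1 ⊆ Icc p1 q1 := Icc_subset_Icc ha1.1 hb1.2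
  -- the clamp onto [a.1, b.1]
  set clab : ℝ → ℝ := fun x => min b.1 (max a.1 x) with hclabdef
  have hclab_cont : Continuous clab := continuous_const.min (continuous_const.max continuous_id)
  have hclab_mem : ∀ x, clab x ∈ Icc a.1 b.1 := fun x =>
    ⟨le_min hab1 (le_max_left _ _), min_le_left _ _⟩
  have hclab_id : ∀ x ∈ Icc a.1 b.1, clab x = x := fun x hx => by
    rw [hclabdef]; simp only; rw [max_eq_right hx.1, min_eq_right hx.2]
  -- the comparison function W
  set W : ℝ → ℝ := fun x => Vfun c a.2 (x, max a.2 (f (clab x))) with hWdef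
  have hWcont : Continuous W := by
    apply (continuous_Vfun hc a.2).comp
    exact continuous_id.prodMk (continuous_const.max
      (hfc.comp_continuous hclab_cont (fun x => hIccsub (hclab_mem x))))
  set Phi : ℝ → ℝ := fun x => ∫ t in a.1..x, W t with hPhidef
  have hPhider : ∀ x, HasDerivAt Phi (W x) x := fun x =>
    (hWcont.integral_hasStrictDerivAt a.1 x).hasDerivAt
  have hPhicont : Continuous Phi :=
    continuous_iff_continuousAt.mpr fun x => (hPhider x).continuousAt
  -- the key comparison inequality
  have hVW : a.1 < b.1 → ∀ q : ℝ × ℝ, q ∈ Icc a b →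
      Vfun c a.2 (q.1, max a.2 (f q.1)) ≤ Vfun c a.2 q := by
    intro hlt q hq
    have hp1q1 : p1 < q1 := lt_of_le_of_lt ha1.1 (lt_of_lt_of_le hlt hb1.2)
    have hx1 : a.1 ≤ q.1 := hq.1.1
    have hx2 : q.1 ≤ b.1 := hq.2.1
    have hy1 : a.2 ≤ q.2 := hq.1.2
    have hy2 : q.2 ≤ b.2 := hq.2.2
    have hxpq : q.1 ∈ Icc p1 q1 := ⟨le_trans ha1.1 hx1, le_trans hx2 hb1.2⟩
    have hfx_ge : p2 ≤ f q.1 := by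
      rw [← hfp]
      exact hfmono (left_mem_Icc.mpr hp1) hxpq hxpq.1
    have hfx_le : f q.1 ≤ q2 := by
      rw [← hfq]
      exact hfmono hxpq (right_mem_Icc.mpr hp1) hxpq.2
    have hfx_le_b2 : f q.1 ≤ b.2 :=
      le_trans (hfmono hxpq (hIccsub (right_mem_Icc.mpr hab1)) hx2) hbup
    set gx : ℝ := max a.2 (f q.1) with hgxdef
    have hgx1 : a.2 ≤ gx := le_max_left _ _
    have I1 : IntervalIntegrable (fun s => Ucurl c (q.1, s)) volume a.2 gx :=
      (hUcont.comp (continuous_const.prodMk continuous_id)).intervalIntegrable _ _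
    have I2 : IntervalIntegrable (fun s => Ucurl c (q.1, s)) volume gx q.2 :=
      (hUcont.comp (continuous_const.prodMk continuous_id)).intervalIntegrable _ _
    have hsplit : Vfun c a.2 (q.1, gx) + (∫ s in gx..q.2, Ucurl c (q.1, s))
        = Vfun c a.2 q := by
      have h := intervalIntegral.integral_add_adjacent_intervals I1 I2
      have hq' : (q.1, q.2) = q := rfl
      rw [Vfun, Vfun]
      rw [← hq']
      exact h
    have hpos : 0 ≤ ∫ s in gx..q.2, Ucurl c (q.1, s) := by
      rcases le_or_gt gx q.2 with hgy | hgy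
      · rcases eq_or_lt_of_le hgy with heq2 | hlt2
        · rw [heq2, intervalIntegral.integral_same]
        · apply intervalIntegral.integral_nonneg hgy
          intro s hs
          refine sign_above_of_ae hp1q1 (hfc q.1 hxpq) hxpq
            ⟨le_trans (le_trans ha2.1 hgx1) hs.1, le_trans hs.2 (le_trans hy2 hb2.2)⟩
            hfx_ge (le_trans (le_max_right a.2 (f q.1)) hs.1) ?_ hUcont hUup
          exact lt_of_le_of_lt (le_max_right a.2 (f q.1))
            (lt_of_lt_of_le hlt2 (le_trans hy2 hb2.2))
      · have hfa2 : a.2 < f q.1 := by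
          by_contra hcon
          push_neg at hcon
          rw [hgxdef] at hgy
          rw [max_eq_left hcon] at hgy
          exact absurd hy1 (not_le.mpr hgy)
        have hgxf : gx = f q.1 := max_eq_right hfa2.le
        rw [intervalIntegral.integral_symm, neg_nonneg]
        have : (∫ s in q.2..gx, -(Ucurl c (q.1, s))) = -∫ s in q.2..gx, Ucurl c (q.1, s) :=
          intervalIntegral.integral_neg
        have hnn : 0 ≤ ∫ s in q.2..gx, -(Ucurl c (q.1, s)) := by
          apply intervalIntegral.integral_nonneg hgy.le
          intro s hs
          rw [neg_nonneg]
          refine sign_below_of_ae hp1q1 (hfc q.1 hxpq) hxpq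
            ⟨le_trans ha2.1 (le_trans hy1 hs.1), le_trans hs.2 (hgxf ▸ hfx_le)⟩
            hfx_le (hgxf ▸ hs.2) (lt_of_le_of_lt ha2.1 hfa2) hUcont hUlow
        rw [this] at hnn
        linarith
    linarith
  -- integrability of the derivative components of the path
  have hIoosub : Ioo (0:ℝ) 1 ⊆ Icc 0 1 := Ioo_subset_Icc_self
  have Id1 : IntegrableOn (fun t => (γ.d t).1) (Ioc 0 1) volume := by
    refine integrableOn_of_deriv_nonneg_off_finite γ.exc_finite.toFinset.card γ.exc
      γ.exc_finite γ.exc_finite le_rfl (fun u => (γ.p u).1) _ 0 1 zero_le_one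
      (continuous_fst.comp_continuousOn γ.cont) (fun t ht => γ.deriv_fst t ⟨hIoosub ht.1, ht.2⟩)
      (fun t ht => γ.d_fst_nonneg t (hIoosub ht.1))
  have Id2 : IntegrableOn (fun t => (γ.d t).2) (Ioc 0 1) volume := by
    refine integrableOn_of_deriv_nonneg_off_finite γ.exc_finite.toFinset.card γ.exc
      γ.exc_finite γ.exc_finite le_rfl (fun u => (γ.p u).2) _ 0 1 zero_le_one
      (continuous_snd.comp_continuousOn γ.cont) (fun t ht => γ.deriv_snd t ⟨hIoosub ht.1, ht.2⟩)
      (fun t ht => γ.d_snd_nonneg t (hIoosub ht.1))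
  -- products of bounded continuous fields with the derivative components are integrable
  have hprod : ∀ G : ℝ × ℝ → ℝ, Continuous G → ∀ D : ℝ → ℝ, IntegrableOn D (Ioc 0 1) volume →
      (∀ t ∈ Icc (0:ℝ) 1, 0 ≤ D t) → IntegrableOn (fun t => G (γ.p t) * D t) (Ioc 0 1) volume := by
    intro G hG D hD hDpos
    obtain ⟨M, hM⟩ := (isCompact_Icc : IsCompact (Icc a b)).exists_bound_of_continuousOn
      hG.continuousOn
    apply Integrable.mono' (hD.const_mul M)
    · exact ((hG.comp_continuousOn (γ.cont.mono Ioc_subset_Icc_self)).aestronglyMeasurable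
        measurableSet_Ioc).mul hD.aestronglyMeasurable
    · filter_upwards [ae_restrict_mem measurableSet_Ioc] with t ht
      have htm := hγmem t (Ioc_subset_Icc_self ht)
      have hDt := hDpos t (Ioc_subset_Icc_self ht)
      rw [norm_mul]
      calc ‖G (γ.p t)‖ * ‖D t‖ ≤ M * ‖D t‖ :=
            mul_le_mul_of_nonneg_right (hM _ htm) (norm_nonneg _)
        _ = M * D t := by rw [Real.norm_eq_abs, abs_of_nonneg hDt]
  set pcInt : ℝ → ℝ := fun t =>
    (c (γ.p t)).1 * (γ.d t).1 + (c (γ.p t)).2 * (γ.d t).2 with hpcIntdef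
  have hc1cont : Continuous fun q : ℝ × ℝ => (c q).1 := hc.continuous.fst
  have hc2cont : Continuous fun q : ℝ × ℝ => (c q).2 := hc.continuous.snd
  have hpcInt : IntervalIntegrable pcInt volume 0 1 := by
    rw [intervalIntegrable_iff_integrableOn_Ioc_of_le zero_le_one]
    exact (hprod _ hc1cont _ Id1 (γ.d_fst_nonneg)).add (hprod _ hc2cont _ Id2 (γ.d_snd_nonneg))
  -- the potential Θ along the path
  set Θ : ℝ → ℝ := fun t =>
    Afun c a.1 a.2 ((γ.p t).1) + Hfun c a.2 (γ.p t) + Phi ((γ.p t).1) with hΘdef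
  set Θd : ℝ → ℝ := fun t =>
    ((c ((γ.p t).1, a.2)).1 + Pfun c a.2 (γ.p t) + W ((γ.p t).1)) * (γ.d t).1
      + (c (γ.p t)).2 * (γ.d t).2 with hΘddef
  have hΘder : ∀ t ∈ Ioo (0:ℝ) 1 \ γ.exc, HasDerivAt Θ (Θd t) t := by
    intro t ht
    have hd1 := γ.deriv_fst t ⟨hIoosub ht.1, ht.2⟩
    have hd2 := γ.deriv_snd t ⟨hIoosub ht.1, ht.2⟩
    have hpair : HasDerivAt γ.p ((γ.d t).1, (γ.d t).2) t := by
      have h := hd1.prodMk hd2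
      exact h
    have h1 : HasDerivAt (fun u => Afun c a.1 a.2 ((γ.p u).1))
        ((c (((γ.p t).1), a.2)).1 * (γ.d t).1) t :=
      (hasDerivAt_Afun hc a.1 a.2 ((γ.p t).1)).comp (h := fun u => (γ.p u).1) t hd1
    have h2' := (hasFDerivAt_Hfun hc a.2 (γ.p t)).comp_hasDerivAt t hpair
    have h2 : HasDerivAt (fun u => Hfun c a.2 (γ.p u))
        (Pfun c a.2 (γ.p t) * (γ.d t).1 + (c (γ.p t)).2 * (γ.d t).2) t := by
      simpa [smul_eq_mul, Function.comp_def] using h2'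
    have h3 : HasDerivAt (fun u => Phi ((γ.p u).1)) (W ((γ.p t).1) * (γ.d t).1) t :=
      (hPhider ((γ.p t).1)).comp (h := fun u => (γ.p u).1) t hd1
    have h := (h1.add h2).add h3
    rw [hΘddef]
    refine h.congr_deriv ?_
    beta_reduce
    ring
  have hΘcont : ContinuousOn Θ (Icc 0 1) := by
    apply ContinuousOn.add
    apply ContinuousOn.add
    · exact ((continuous_Afun hc a.1 a.2).comp continuous_fst).comp_continuousOn γ.cont
    · exact (continuous_Hfun hc a.2).comp_continuousOn γ.cont
    · exact (hPhicont.comp continuous_fst).comp_continuousOn γ.cont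
  have hΘdInt : IntervalIntegrable Θd volume 0 1 := by
    rw [intervalIntegrable_iff_integrableOn_Ioc_of_le zero_le_one]
    have hGcont : Continuous fun q : ℝ × ℝ =>
        (c (q.1, a.2)).1 + Pfun c a.2 q + W q.1 := by
      apply Continuous.add
      apply Continuous.add
      · exact (hc.continuous.comp ((continuous_fst).prodMk continuous_const)).fst
      · exact continuous_Pfun hc a.2
      · exact hWcont.comp continuous_fst
    exact (hprod _ hGcont _ Id1 (γ.d_fst_nonneg)).add (hprod _ hc2cont _ Id2 (γ.d_snd_nonneg))
  have EΘ : ∫ t in (0:ℝ)..1, Θd t = Θ 1 - Θ 0 :=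
    integral_eq_of_hasDerivAt_off_countable_of_le Θ Θd zero_le_one
      γ.exc_finite.countable hΘcont hΘder hΘdInt
  have hΘ0 : Θ 0 = 0 := by
    rw [hΘdef]
    simp only [hγ0]
    rw [hPhidef]
    simp [Afun, Hfun, intervalIntegral.integral_same]
  have hΘ1 : Θ 1 = Afun c a.1 a.2 b.1 + Hfun c a.2 b + Phi b.1 := by
    rw [hΘdef]; simp only [hγ1]
  -- pointwise comparison
  have hae : Θd ≤ᵐ[volume.restrict (Icc (0:ℝ) 1)] pcInt := by
    have hnull : ∀ᵐ t ∂(volume : Measure ℝ), t ∉ γ.exc ∪ ({0, 1} : Set ℝ) := by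
      apply measure_eq_zero_iff_ae_notMem.mp
      exact Set.Countable.measure_zero
        (γ.exc_finite.countable.union (Set.Countable.insert _ (Set.countable_singleton _))) _
    filter_upwards [ae_restrict_mem measurableSet_Icc, ae_restrict_of_ae hnull] with t htIcc htn
    rw [mem_union, not_or] at htn
    have ht0 : t ≠ 0 := fun h => htn.2 (by simp [h])
    have ht1 : t ≠ 1 := fun h => htn.2 (by simp [h])
    have htIoo : t ∈ Ioo (0:ℝ) 1 := ⟨lt_of_le_of_ne htIcc.1 (Ne.symm ht0), lt_of_le_of_ne htIcc.2 ht1⟩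
    have hdc := cost_decomp hc a.2 (γ.p t)
    rcases eq_or_lt_of_le hab1 with heq | hlt
    · have hd1z : (γ.d t).1 = 0 := by
        have hconst : ∀ u ∈ Icc (0:ℝ) 1, ((γ.p u).1) = a.1 := fun u hu =>
          le_antisymm (heq ▸ (hγmem u hu).2.1) (hγmem u hu).1.1
        have hev : (fun u => (γ.p u).1) =ᶠ[nhds t] fun _ => a.1 :=
          Filter.eventually_of_mem (isOpen_Ioo.mem_nhds htIoo)
            (fun u hu => hconst u (hIoosub hu))
        exact (γ.deriv_fst t ⟨htIcc, htn.1⟩).unique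
          ((hasDerivAt_const t a.1).congr_of_eventuallyEq hev)
      rw [hΘddef, hpcIntdef]
      simp only [hd1z, mul_zero, zero_add, zero_mul, le_refl]
    · have hmem : γ.p t ∈ Icc a b := hγmem t htIcc
      have hclid : clab ((γ.p t).1) = (γ.p t).1 := hclab_id _ ⟨hmem.1.1, hmem.2.1⟩
      have hWle : W ((γ.p t).1) ≤ Vfun c a.2 (γ.p t) := by
        rw [hWdef]
        simp only
        rw [hclid]
        exact hVW hlt (γ.p t) hmem
      have hd1nn : 0 ≤ (γ.d t).1 := γ.d_fst_nonneg t htIcc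
      rw [hΘddef, hpcIntdef]
      simp only
      rw [hdc]
      have := mul_le_mul_of_nonneg_right (add_le_add_left hWle
        ((c ((γ.p t).1, a.2)).1 + Pfun c a.2 (γ.p t))) hd1nn
      calc ((c ((γ.p t).1, a.2)).1 + Pfun c a.2 (γ.p t) + W ((γ.p t).1)) * (γ.d t).1
            + (c (γ.p t)).2 * (γ.d t).2
          ≤ ((c ((γ.p t).1, a.2)).1 + Pfun c a.2 (γ.p t) + Vfun c a.2 (γ.p t)) * (γ.d t).1
            + (c (γ.p t)).2 * (γ.d t).2 := by
            apply add_le_add_left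
            apply mul_le_mul_of_nonneg_right _ hd1nn
            linarith
        _ = _ := rfl
  have hcost : Afun c a.1 a.2 b.1 + Hfun c a.2 b + Phi b.1 ≤ pathCost c γ := by
    have h1 : (∫ t in (0:ℝ)..1, Θd t) ≤ ∫ t in (0:ℝ)..1, pcInt t :=
      intervalIntegral.integral_mono_ae_restrict zero_le_one hΘdInt hpcInt hae
    rw [EΘ, hΘ0, hΘ1, sub_zero] at h1
    exact h1.trans_eq (by rw [pathCost])
  -- identification of the right-hand side
  have hRHSeq : (∫ t in a.1..b.1,
        ((c (t, max a.2 (f t))).1 +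
          (c (t, max a.2 (f t))).2 *
            derivWithin (fun u => max a.2 (f u)) (Icc a.1 b.1) t)) +
      (∫ s in (max a.2 (f b.1))..b.2, (c (b.1, s)).2)
      = Afun c a.1 a.2 b.1 + Hfun c a.2 b + Phi b.1 := by
    rcases eq_or_lt_of_le hab1 with heq | hlt
    · -- degenerate: a.1 = b.1
      have hfb : f b.1 ≤ a.2 := by rw [← heq]; exact haup
      have hmax : max a.2 (f b.1) = a.2 := max_eq_left hfb
      have hint0 : (∫ t in a.1..b.1,
          ((c (t, max a.2 (f t))).1 +
            (c (t, max a.2 (f t))).2 *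
              derivWithin (fun u => max a.2 (f u)) (Icc a.1 b.1) t)) = 0 := by
        rw [← heq, intervalIntegral.integral_same]
      have hA0 : Afun c a.1 a.2 b.1 = 0 := by
        rw [Afun, ← heq, intervalIntegral.integral_same]
      have hPhi0 : Phi b.1 = 0 := by
        rw [hPhidef]; simp only; rw [← heq, intervalIntegral.integral_same]
      rw [hint0, hA0, hPhi0, hmax]
      rw [Hfun]
      ring
    · -- main case : a.1 < b.1
      have hp1q1 : p1 < q1 := lt_of_le_of_lt ha1.1 (lt_of_lt_of_le hlt hb1.2)
      set S0 : Set ℝ := {t | t ∈ Icc a.1 b.1 ∧ f t ≤ a.2} with hS0def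
      have hS0a : a.1 ∈ S0 := ⟨left_mem_Icc.mpr hab1, haup⟩
      have hS0ne : S0.Nonempty := ⟨a.1, hS0a⟩
      have hS0bdd : BddAbove S0 := ⟨b.1, fun x hx => hx.1.2⟩
      set t0 : ℝ := sSup S0 with ht0def
      have ht0mem : t0 ∈ Icc a.1 b.1 :=
        ⟨le_csSup hS0bdd hS0a, csSup_le hS0ne (fun x hx => hx.1.2)⟩
      have hhigh : ∀ t ∈ Icc a.1 b.1, t0 < t → a.2 < f t := by
        intro t ht htt
        by_contra hcon; push_neg at hcon
        exact absurd (le_csSup hS0bdd ⟨ht, hcon⟩) (not_le.mpr htt)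
      have hloc_lo : ∀ t ∈ Ioo a.1 b.1, t < t0 → ∃ u, t < u ∧ u ≤ b.1 ∧
          (∀ τ ∈ Ioo a.1 u, clab τ = τ ∧ f τ ≤ a.2) := by
        intro t ht htt
        obtain ⟨u, huS, htu⟩ := exists_lt_of_lt_csSup hS0ne htt
        refine ⟨u, htu, huS.1.2, ?_⟩
        intro τ hτ
        have hτmem : τ ∈ Icc a.1 b.1 := ⟨hτ.1.le, le_trans hτ.2.le huS.1.2⟩
        have hfτ : f τ ≤ a.2 :=
          le_trans (hfmono (hIccsub hτmem) (hIccsub huS.1) hτ.2.le) huS.2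
        exact ⟨hclab_id τ hτmem, hfτ⟩
      -- the derivative of f, continuously extended
      set df : ℝ → ℝ := fun t => derivWithin f (Icc p1 q1) (clab t) with hdfdef
      have hdf_cont : Continuous df :=
        (hf.continuousOn_derivWithin (uniqueDiffOn_Icc hp1q1) le_rfl).comp_continuous
          hclab_cont (fun x => hIccsub (hclab_mem x))
      have hfderiv : ∀ t ∈ Ioo a.1 b.1, HasDerivAt f (df t) t := by
        intro t ht
        have htpq : t ∈ Ioo p1 q1 := ⟨lt_of_le_of_lt ha1.1 ht.1, lt_of_lt_of_le ht.2 hb1.2⟩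
        have hnhds : Icc p1 q1 ∈ nhds t := Icc_mem_nhds htpq.1 htpq.2
        have h1 : DifferentiableWithinAt ℝ f (Icc p1 q1) t :=
          (hf.differentiableOn one_ne_zero) t (hIccsub (Ioo_subset_Icc_self ht))
        have h3 : df t = deriv f t := by
          rw [hdfdef]; simp only
          rw [hclab_id t (Ioo_subset_Icc_self ht), derivWithin_of_mem_nhds hnhds]
        rw [h3]
        exact (h1.differentiableAt hnhds).hasDerivAt
      set dg : ℝ → ℝ := fun t => if f (clab t) ≤ a.2 then 0 else df t with hdgdef
      set Ξ : ℝ → ℝ := fun x =>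
        Afun c a.1 a.2 x + Hfun c a.2 (x, max a.2 (f (clab x))) with hΞdef
      set Ξd : ℝ → ℝ := fun t => (c (t, a.2)).1 + Pfun c a.2 (t, max a.2 (f (clab t)))
        + (c (t, max a.2 (f (clab t)))).2 * dg t with hΞddef
      have hgclcont : Continuous fun x : ℝ => max a.2 (f (clab x)) :=
        continuous_const.max (hfc.comp_continuous hclab_cont (fun x => hIccsub (hclab_mem x)))
      have hΞder : ∀ t ∈ Ioo a.1 b.1 \ ({t0} : Set ℝ), HasDerivAt Ξ (Ξd t) t := by
        intro t ht
        obtain ⟨htI, htne'⟩ := ht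
        have htne : t ≠ t0 := fun h => htne' (by simp [h])
        have hAd := hasDerivAt_Afun hc a.1 a.2 t
        rcases lt_or_gt_of_ne htne with hlt0 | hgt0
        · obtain ⟨u, htu, hub, hloc⟩ := hloc_lo t htI hlt0
          have hN : Ioo a.1 u ∈ nhds t := Ioo_mem_nhds htI.1 htu
          have hH0 : HasDerivAt (fun x => Hfun c a.2 (x, max a.2 (f (clab x)))) 0 t := by
            apply (hasDerivAt_const t (0:ℝ)).congr_of_eventuallyEq
            apply Filter.eventually_of_mem hN
            intro τ hτ
            show Hfun c a.2 (τ, max a.2 (f (clab τ))) = 0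
            rw [(hloc τ hτ).1, max_eq_left (hloc τ hτ).2]
            simp [Hfun, intervalIntegral.integral_same]
          have h := hAd.add hH0
          have hloct := hloc t ⟨htI.1, htu⟩
          have hval : Ξd t = (c (t, a.2)).1 + 0 := by
            rw [hΞddef]; simp only
            rw [hloct.1, max_eq_left hloct.2]
            have hdg0 : dg t = 0 := by
              rw [hdgdef]; simp only
              rw [hloct.1]
              exact if_pos hloct.2
            rw [hdg0]
            simp [Pfun, intervalIntegral.integral_same]
          rw [hval]
          exact h
        · have hN : Ioo t0 b.1 ∈ nhds t := Ioo_mem_nhds hgt0 htI.2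
          have hloc : ∀ τ ∈ Ioo t0 b.1, clab τ = τ ∧ a.2 < f τ := by
            intro τ hτ
            have hτmem : τ ∈ Icc a.1 b.1 := ⟨le_trans ht0mem.1 hτ.1.le, hτ.2.le⟩
            exact ⟨hclab_id τ hτmem, hhigh τ hτmem hτ.1⟩
          have hloct := hloc t ⟨hgt0, htI.2⟩
          have hgder : HasDerivAt (fun x => max a.2 (f (clab x))) (df t) t := by
            apply (hfderiv t htI).congr_of_eventuallyEq
            apply Filter.eventually_of_mem hN
            intro τ hτ
            show max a.2 (f (clab τ)) = f τ
            rw [(hloc τ hτ).1, max_eq_right (hloc τ hτ).2.le]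
          have hpair : HasDerivAt (fun x : ℝ => (x, max a.2 (f (clab x))))
              ((1 : ℝ), df t) t := (hasDerivAt_id t).prodMk hgder
          have hHder := (hasFDerivAt_Hfun hc a.2
            (t, max a.2 (f (clab t)))).comp_hasDerivAt t hpair
          have h := hAd.add hHder
          have hdgt : dg t = df t := by
            rw [hdgdef]; simp only
            rw [hloct.1]
            exact if_neg (not_le.mpr hloct.2)
          rw [hΞddef]; simp only
          rw [hdgt]
          refine h.congr_deriv ?_
          simp [smul_eq_mul]
          ring
      have hΞcont : Continuous Ξ := by
        rw [hΞdef]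
        apply (continuous_Afun hc a.1 a.2).add
        exact (continuous_Hfun hc a.2).comp (continuous_id.prodMk hgclcont)
      have hdg_meas : Measurable dg := by
        have hclosed : IsClosed {t : ℝ | f (clab t) ≤ a.2} :=
          isClosed_le (hfc.comp_continuous hclab_cont (fun x => hIccsub (hclab_mem x)))
            continuous_const
        exact Measurable.ite hclosed.measurableSet measurable_const hdf_cont.measurable
      have hpart2cont : Continuous fun t : ℝ => (c (t, max a.2 (f (clab t)))).2 :=
        (hc.continuous.comp (continuous_id.prodMk hgclcont)).snd
      have hΞdInt : IntervalIntegrable Ξd volume a.1 b.1 := by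
        rw [intervalIntegrable_iff_integrableOn_Ioc_of_le hlt.le]
        rw [hΞddef]
        refine Integrable.add ?_ ?_
        · apply Continuous.integrableOn_Ioc
          apply Continuous.add
          · exact (hc.continuous.comp (continuous_id.prodMk continuous_const)).fst
          · exact (continuous_Pfun hc a.2).comp (continuous_id.prodMk hgclcont)
        · have hmaj : Continuous fun t : ℝ =>
              ‖(c (t, max a.2 (f (clab t)))).2‖ * ‖df t‖ := hpart2cont.norm.mul hdf_cont.norm
          apply Integrable.mono' hmaj.integrableOn_Ioc
          · exact ((hpart2cont.continuousOn).aestronglyMeasurable measurableSet_Ioc).mul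
              hdg_meas.aestronglyMeasurable
          · apply ae_of_all
            intro t
            rw [norm_mul]
            apply mul_le_mul_of_nonneg_left _ (norm_nonneg _)
            rw [hdgdef]
            simp only
            split
            · rw [norm_zero]; exact norm_nonneg _
            · exact le_refl _
      have EΞ : ∫ t in a.1..b.1, Ξd t = Ξ b.1 - Ξ a.1 :=
        integral_eq_of_hasDerivAt_off_countable_of_le Ξ Ξd hlt.le
          (countable_singleton t0) hΞcont.continuousOn hΞder hΞdInt
      have hcongr : (∫ t in a.1..b.1,
          ((c (t, max a.2 (f t))).1 +
            (c (t, max a.2 (f t))).2 *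
              derivWithin (fun u => max a.2 (f u)) (Icc a.1 b.1) t))
          = ∫ t in a.1..b.1, (Ξd t + W t) := by
        apply intervalIntegral.integral_congr_ae
        have hnull : ∀ᵐ t ∂(volume : Measure ℝ), t ∉ ({t0, b.1} : Set ℝ) :=
          measure_eq_zero_iff_ae_notMem.mp (Set.Countable.measure_zero
            (Set.Countable.insert _ (countable_singleton _)) _)
        filter_upwards [hnull] with t htn htI
        rw [uIoc_of_le hlt.le] at htI
        have htne : t ≠ t0 ∧ t ≠ b.1 := by
          constructor <;> intro h <;> exact htn (by simp [h])
        have htIoo : t ∈ Ioo a.1 b.1 := ⟨htI.1, lt_of_le_of_ne htI.2 htne.2⟩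
        have hud := (uniqueDiffOn_Icc hlt) t (Ioo_subset_Icc_self htIoo)
        have hclid := hclab_id t (Ioo_subset_Icc_self htIoo)
        rcases lt_or_gt_of_ne htne.1 with hlt0 | hgt0
        · obtain ⟨u, htu, hub, hloc⟩ := hloc_lo t htIoo hlt0
          have hN : Ioo a.1 u ∈ nhds t := Ioo_mem_nhds htIoo.1 htu
          have hft : f t ≤ a.2 := (hloc t ⟨htIoo.1, htu⟩).2
          have hgd : HasDerivAt (fun u' => max a.2 (f u')) 0 t := by
            apply (hasDerivAt_const t a.2).congr_of_eventuallyEq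
            apply Filter.eventually_of_mem hN
            intro τ hτ
            show max a.2 (f τ) = a.2
            rw [max_eq_left (hloc τ hτ).2]
          have hdw : derivWithin (fun u' => max a.2 (f u')) (Icc a.1 b.1) t = 0 :=
            hgd.hasDerivWithinAt.derivWithin hud
          rw [hdw, max_eq_left hft]
          rw [hΞddef, hWdef]; simp only
          rw [hclid, max_eq_left hft]
          have hdg0 : dg t = 0 := by
            rw [hdgdef]; simp only
            rw [hclid]
            exact if_pos hft
          rw [hdg0]
          simp [Pfun, Vfun, intervalIntegral.integral_same]
        · have hN : Ioo t0 b.1 ∈ nhds t := Ioo_mem_nhds hgt0 htIoo.2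
          have hloc2 : ∀ τ ∈ Ioo t0 b.1, a.2 < f τ := fun τ hτ =>
            hhigh τ ⟨le_trans ht0mem.1 hτ.1.le, hτ.2.le⟩ hτ.1
          have hft : a.2 < f t := hloc2 t ⟨hgt0, htIoo.2⟩
          have hgd : HasDerivAt (fun u' => max a.2 (f u')) (df t) t := by
            apply (hfderiv t htIoo).congr_of_eventuallyEq
            apply Filter.eventually_of_mem hN
            intro τ hτ
            show max a.2 (f τ) = f τ
            rw [max_eq_right (hloc2 τ hτ).le]
          have hdw : derivWithin (fun u' => max a.2 (f u')) (Icc a.1 b.1) t = df t :=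
            hgd.hasDerivWithinAt.derivWithin hud
          rw [hdw, max_eq_right hft.le]
          rw [hΞddef, hWdef]; simp only
          rw [hclid, max_eq_right hft.le]
          have hdgt : dg t = df t := by
            rw [hdgdef]; simp only
            rw [hclid]
            exact if_neg (not_le.mpr hft)
          rw [hdgt]
          have hdc := cost_decomp hc a.2 (t, f t)
          simp only at hdc
          rw [hdc]
          ring
      have hvert : (∫ s in (max a.2 (f b.1))..b.2, (c (b.1, s)).2)
          = Hfun c a.2 b - Hfun c a.2 (b.1, max a.2 (f b.1)) := by
        have hcont2 : Continuous fun s : ℝ => (c (b.1, s)).2 :=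
          (hc.continuous.comp (continuous_const.prodMk continuous_id)).snd
        have h : (∫ s in a.2..(max a.2 (f b.1)), (c (b.1, s)).2)
            + (∫ s in (max a.2 (f b.1))..b.2, (c (b.1, s)).2)
            = ∫ s in a.2..b.2, (c (b.1, s)).2 :=
          intervalIntegral.integral_add_adjacent_intervals
            (hcont2.intervalIntegrable _ _) (hcont2.intervalIntegrable _ _)
        have hb' : Hfun c a.2 b = ∫ s in a.2..b.2, (c (b.1, s)).2 := rfl
        have hgb' : Hfun c a.2 (b.1, max a.2 (f b.1))
            = ∫ s in a.2..(max a.2 (f b.1)), (c (b.1, s)).2 := rfl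
        rw [hb', hgb']
        linarith
      have hΞa : Ξ a.1 = 0 := by
        rw [hΞdef]; simp only
        rw [hclab_id a.1 (left_mem_Icc.mpr hab1), max_eq_left haup]
        simp [Afun, Hfun, intervalIntegral.integral_same]
      have hΞb : Ξ b.1 = Afun c a.1 a.2 b.1 + Hfun c a.2 (b.1, max a.2 (f b.1)) := by
        rw [hΞdef]; simp only
        rw [hclab_id b.1 (right_mem_Icc.mpr hab1)]
      have hWint : (∫ t in a.1..b.1, W t) = Phi b.1 := by rw [hPhidef]
      rw [hcongr, intervalIntegral.integral_add hΞdInt (hWcont.intervalIntegrable _ _),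
        EΞ, hΞa, hΞb, hvert, hWint]
      ring
  rw [hRHSeq]
  exact hcost
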